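/- Let ω : T^d → [a,1] be continuous, non-constant, attaining its extremes on null sets, with 0 ≤ a < 1. Define α = a + (2π)^d(∫ dp/(ω-a))^{-1} and β = 1 - (2π)^d(∫ dp/(1-ω))^{-1} (with the conventions α = a, resp. β = 1, when the corresponding integral is infinite). Then a ≤ α < β ≤ 1. -/

import Mathlib

open MeasureTheory Real Filter Topology Set
open scoped RealInnerProductSpace

noncomputable section

instance : Fact (0 < 2 * π) := ⟨by positivity⟩

/-- The d-dimensional torus ℝ^d/(2πℤ)^d, with Lebesgue (Haar) measure of total mass (2π)^d. -/
abbrev Torus (d : ℕ) := Fin d → AddCircle (2 * π)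

lemma cs_strict {X : Type*} [MeasurableSpace X] {μ : Measure X} [IsFiniteMeasure μ]
    (f : X → ℝ) (hmeas : AEStronglyMeasurable f μ) (hpos : ∀ᵐ p ∂μ, 0 < f p)
    (hfi : Integrable f μ) (hinv : Integrable (fun p => (f p)⁻¹) μ)
    (hnc : ¬ ∃ c, f =ᵐ[μ] fun _ => c) :
    (μ Set.univ).toReal ^ 2 < (∫ p, f p ∂μ) * ∫ p, (f p)⁻¹ ∂μ := by
  have hμ : μ ≠ 0 := by
    rintro rfl; exact hnc ⟨0, by simp [Filter.EventuallyEq]⟩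
  set g : X → ℝ := fun p => Real.sqrt (f p) with hg
  set h : X → ℝ := fun p => Real.sqrt ((f p)⁻¹) with hh
  have hgm : AEStronglyMeasurable g μ :=
    Real.continuous_sqrt.comp_aestronglyMeasurable hmeas
  have hhm : AEStronglyMeasurable h μ :=
    Real.continuous_sqrt.comp_aestronglyMeasurable hmeas.aemeasurable.inv.aestronglyMeasurable
  have hg2 : MemLp g 2 μ := by
    rw [memLp_two_iff_integrable_sq hgm]
    refine hfi.congr ?_
    filter_upwards [hpos] with p hp
    exact (Real.sq_sqrt hp.le).symm
  have hh2 : MemLp h 2 μ := by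
    rw [memLp_two_iff_integrable_sq hhm]
    refine hinv.congr ?_
    filter_upwards [hpos] with p hp
    exact (Real.sq_sqrt (inv_nonneg.mpr hp.le)).symm
  set F := hg2.toLp g
  set G := hh2.toLp h
  have hF : (F : X → ℝ) =ᵐ[μ] g := hg2.coeFn_toLp
  have hG : (G : X → ℝ) =ᵐ[μ] h := hh2.coeFn_toLp
  have hinner : ⟪F, G⟫ = (μ Set.univ).toReal := by
    rw [MeasureTheory.L2.inner_def]
    have heq : ∫ p, ⟪F p, G p⟫ ∂μ = ∫ p, (1:ℝ) ∂μ := by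
      refine integral_congr_ae ?_
      filter_upwards [hF, hG, hpos] with p h1 h2 h3
      simp only [RCLike.inner_apply, conj_trivial, h1, h2, hg, hh]
      rw [mul_comm, ← Real.sqrt_mul h3.le, mul_inv_cancel₀ h3.ne', Real.sqrt_one]
    rw [heq, integral_const, smul_eq_mul, mul_one, measureReal_def]
  have hnF : ‖F‖ ^ 2 = ∫ p, f p ∂μ := by
    rw [← real_inner_self_eq_norm_sq, MeasureTheory.L2.inner_def]
    refine integral_congr_ae ?_
    filter_upwards [hF, hpos] with p h1 h3
    simp only [RCLike.inner_apply, conj_trivial, h1, hg]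
    exact Real.mul_self_sqrt h3.le
  have hnG : ‖G‖ ^ 2 = ∫ p, (f p)⁻¹ ∂μ := by
    rw [← real_inner_self_eq_norm_sq, MeasureTheory.L2.inner_def]
    refine integral_congr_ae ?_
    filter_upwards [hG, hpos] with p h1 h3
    simp only [RCLike.inner_apply, conj_trivial, h1, hh]
    exact Real.mul_self_sqrt (inv_nonneg.mpr h3.le)
  have hnull : ∀ (φ : X → ℝ), (∀ᵐ p ∂μ, 0 < φ p) → μ (Function.support φ)ᶜ = 0 := by
    intro φ hφ
    refine measure_mono_null (fun p hp => ?_) (ae_iff.mp hφ)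
    simp only [Set.mem_compl_iff, Function.mem_support, not_not] at hp
    simp [hp]
  have hsupp : ∀ (φ : X → ℝ), (∀ᵐ p ∂μ, 0 < φ p) → 0 < μ (Function.support φ) := by
    intro φ hφ
    rw [pos_iff_ne_zero]
    intro hz
    have hu : μ Set.univ = 0 := by
      have := measure_union_le (μ := μ) (Function.support φ) (Function.support φ)ᶜ
      simpa [Set.union_compl_self, hz, hnull φ hφ] using this
    exact hμ (Measure.measure_univ_eq_zero.mp hu)
  have hJpos : 0 < ∫ p, f p ∂μ := by
    rw [integral_pos_iff_support_of_nonneg_ae (hpos.mono fun p hp => hp.le) hfi]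
    exact hsupp f hpos
  have hIpos : 0 < ∫ p, (f p)⁻¹ ∂μ := by
    rw [integral_pos_iff_support_of_nonneg_ae (hpos.mono fun p hp => (inv_pos.mpr hp).le) hinv]
    exact hsupp _ (hpos.mono fun p hp => inv_pos.mpr hp)
  have hne : ‖G‖ • F ≠ ‖F‖ • G := by
    intro heqq
    have e1 : ((‖G‖ • F : Lp ℝ 2 μ) : X → ℝ) =ᵐ[μ] fun p => ‖G‖ * g p := by
      filter_upwards [Lp.coeFn_smul ‖G‖ F, hF] with p h1 h2
      simp [h1, h2]
    have e2 : ((‖F‖ • G : Lp ℝ 2 μ) : X → ℝ) =ᵐ[μ] fun p => ‖F‖ * h p := by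
      filter_upwards [Lp.coeFn_smul ‖F‖ G, hG] with p h1 h2
      simp [h1, h2]
    rw [heqq] at e1
    have heq2 : ∀ᵐ p ∂μ, ‖G‖ * g p = ‖F‖ * h p := by
      filter_upwards [e1, e2] with p h1 h2
      rw [← h1, h2]
    have hFpos : 0 < ‖F‖ := by
      have h4 := hnF ▸ hJpos; nlinarith [norm_nonneg F]
    have hGpos : 0 < ‖G‖ := by
      have h4 := hnG ▸ hIpos; nlinarith [norm_nonneg G]
    refine hnc ⟨‖F‖ / ‖G‖, ?_⟩
    filter_upwards [heq2, hpos] with p h1 h3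
    have hmul : ‖G‖ * (g p * g p) = ‖F‖ * (h p * g p) := by
      rw [← mul_assoc, h1]; ring
    have hgg : g p * g p = f p := Real.mul_self_sqrt h3.le
    have hhg : h p * g p = 1 := by
      simp only [hh, hg]
      rw [← Real.sqrt_mul (inv_nonneg.mpr h3.le), inv_mul_cancel₀ h3.ne', Real.sqrt_one]
    rw [hgg, hhg, mul_one] at hmul
    rw [eq_div_iff hGpos.ne']
    linarith [hmul]
  have hlt : ⟪F, G⟫ < ‖F‖ * ‖G‖ := inner_lt_norm_mul_iff_real.mpr hne
  rw [hinner] at hlt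
  have hV : 0 ≤ (μ Set.univ).toReal := ENNReal.toReal_nonneg
  calc (μ Set.univ).toReal ^ 2 < (‖F‖ * ‖G‖) ^ 2 := by
        nlinarith [norm_nonneg F, norm_nonneg G]
    _ = ‖F‖^2 * ‖G‖^2 := by ring
    _ = _ := by rw [hnF, hnG]

lemma torus_integrable {d : ℕ} (f : Torus d → ℝ) (hf : Continuous f) : Integrable f :=
  hf.integrable_of_hasCompactSupport
    (IsCompact.of_isClosed_subset isCompact_univ (isClosed_tsupport f) (Set.subset_univ _))

lemma torus_vol (d : ℕ) : (volume (Set.univ : Set (Torus d))).toReal = (2 * π) ^ d := by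
  rw [MeasureTheory.volume_pi, MeasureTheory.Measure.pi_univ]
  simp [AddCircle.measure_univ, ENNReal.toReal_pow, Real.pi_pos.le]

open Classical in
theorem alpha_lt_beta (d : ℕ) (a : ℝ) (ha : 0 ≤ a) (ha1 : a < 1)
    (ω : Torus d → ℝ) (hω : Continuous ω) (hrange : ∀ p, ω p ∈ Icc a 1)
    (hmin : ∃ p, ω p = a) (hmax : ∃ p, ω p = 1)
    (hminnull : volume {p | ω p = a} = 0) (hmaxnull : volume {p | ω p = 1} = 0)
    (hnc : ¬ ∃ c : ℝ, ω =ᵐ[volume] fun _ => c)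
    (α β : ℝ)
    (hα : α = if Integrable (fun p => (ω p - a)⁻¹) then
        a + (2 * π) ^ d * (∫ p, (ω p - a)⁻¹)⁻¹ else a)
    (hβ : β = if Integrable (fun p => (1 - ω p)⁻¹) then
        1 - (2 * π) ^ d * (∫ p, (1 - ω p)⁻¹)⁻¹ else 1) :
    a ≤ α ∧ α < β ∧ β ≤ 1 := by
  set V : ℝ := (2 * π) ^ d with hVdef
  have hVpos : 0 < V := by positivity
  have hV : (volume (Set.univ : Set (Torus d))).toReal = V := torus_vol d
  -- a.e. strict bounds
  have hpos1 : ∀ᵐ p, 0 < ω p - a := by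
    rw [ae_iff]
    refine measure_mono_null (fun p hp => ?_) hminnull
    simp only [Set.mem_setOf_eq, not_lt] at hp ⊢
    exact le_antisymm (by linarith) (hrange p).1
  have hpos2 : ∀ᵐ p, 0 < 1 - ω p := by
    rw [ae_iff]
    refine measure_mono_null (fun p hp => ?_) hmaxnull
    simp only [Set.mem_setOf_eq, not_lt] at hp ⊢
    exact le_antisymm (hrange p).2 (by linarith)
  have hfi1 : Integrable (fun p => ω p - a) := torus_integrable _ (hω.sub continuous_const)
  have hfi2 : Integrable (fun p => 1 - ω p) := torus_integrable _ (continuous_const.sub hω)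
  have hnc1 : ¬ ∃ c : ℝ, (fun p => ω p - a) =ᵐ[volume] fun _ => c := by
    rintro ⟨c, hc⟩
    exact hnc ⟨c + a, hc.mono fun p hp => by dsimp at hp ⊢; linarith⟩
  have hnc2 : ¬ ∃ c : ℝ, (fun p => 1 - ω p) =ᵐ[volume] fun _ => c := by
    rintro ⟨c, hc⟩
    exact hnc ⟨1 - c, hc.mono fun p hp => by dsimp at hp ⊢; linarith⟩
  set J₁ : ℝ := ∫ p, (ω p - a) with hJ1
  set J₂ : ℝ := ∫ p, (1 - ω p) with hJ2
  have hJsum : J₁ + J₂ = (1 - a) * V := by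
    rw [hJ1, hJ2, ← integral_add hfi1 hfi2]
    have : (fun p => (ω p - a) + (1 - ω p)) = fun _ : Torus d => (1 - a) := by
      funext p; ring
    rw [this, integral_const, smul_eq_mul, measureReal_def, hV, mul_comm]
  have hJ1le : J₁ ≤ (1 - a) * V := by
    have h2 : 0 ≤ J₂ := integral_nonneg fun p => by simp only [Pi.zero_apply]; linarith [(hrange p).2]
    linarith
  have hJ2le : J₂ ≤ (1 - a) * V := by
    have h1 : 0 ≤ J₁ := integral_nonneg fun p => by simp only [Pi.zero_apply]; linarith [(hrange p).1]
    linarith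
  -- Strict CS consequences
  have key : ∀ (f : Torus d → ℝ), Continuous f → (∀ᵐ p, 0 < f p) →
      (¬ ∃ c : ℝ, f =ᵐ[volume] fun _ => c) → Integrable (fun p => (f p)⁻¹) →
      ∀ J : ℝ, J = ∫ p, f p → J ≤ (1 - a) * V →
      V * (∫ p, (f p)⁻¹)⁻¹ < (1 - a) ∧ V * (∫ p, (f p)⁻¹)⁻¹ < J / V ∧
        0 < ∫ p, (f p)⁻¹ := by
    intro f hf hposf hncf hintf J hJ hJle
    have hcs := cs_strict f hf.aestronglyMeasurable hposf (torus_integrable f hf) hintf hncf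
    rw [hV, ← hJ] at hcs
    set I : ℝ := ∫ p, (f p)⁻¹ with hI
    have hInn : 0 ≤ I := integral_nonneg_of_ae (hposf.mono fun p hp => (inv_pos.mpr hp).le)
    have hJnn : 0 ≤ J := hJ ▸ integral_nonneg_of_ae (hposf.mono fun p hp => hp.le)
    have hIpos : 0 < I := by nlinarith
    have hJpos : 0 < J := by nlinarith
    have k : V * I⁻¹ < J / V := by
      rw [← div_eq_mul_inv]
      exact (div_lt_div_iff₀ hIpos hVpos).mpr (by nlinarith)
    refine ⟨?_, k, hIpos⟩
    have : J / V ≤ 1 - a := by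
      rw [div_le_iff₀ hVpos]; linarith
    linarith
  by_cases h1 : Integrable (fun p => (ω p - a)⁻¹) <;>
    by_cases h2 : Integrable (fun p => (1 - ω p)⁻¹) <;>
    simp only [h1, h2, if_true, if_false] at hα hβ
  · obtain ⟨k1a, k1b, k1c⟩ := key (fun p => ω p - a) (hω.sub continuous_const) hpos1 hnc1 h1 J₁ rfl hJ1le
    obtain ⟨k2a, k2b, k2c⟩ := key (fun p => 1 - ω p) (continuous_const.sub hω) hpos2 hnc2 h2 J₂ rfl hJ2le
    have n1 : 0 ≤ V * (∫ p, (ω p - a)⁻¹)⁻¹ := mul_nonneg hVpos.le (inv_nonneg.mpr k1c.le)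
    have n2 : 0 ≤ V * (∫ p, (1 - ω p)⁻¹)⁻¹ := mul_nonneg hVpos.le (inv_nonneg.mpr k2c.le)
    have hsum : J₁ / V + J₂ / V = 1 - a := by
      field_simp
      linarith
    exact ⟨by rw [hα]; linarith, by rw [hα, hβ]; linarith, by rw [hβ]; linarith⟩
  · obtain ⟨k1a, k1b, k1c⟩ := key (fun p => ω p - a) (hω.sub continuous_const) hpos1 hnc1 h1 J₁ rfl hJ1le
    have n1 : 0 ≤ V * (∫ p, (ω p - a)⁻¹)⁻¹ := mul_nonneg hVpos.le (inv_nonneg.mpr k1c.le)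
    exact ⟨by rw [hα]; linarith, by rw [hα, hβ]; linarith, le_of_eq hβ⟩
  · obtain ⟨k2a, k2b, k2c⟩ := key (fun p => 1 - ω p) (continuous_const.sub hω) hpos2 hnc2 h2 J₂ rfl hJ2le
    have n2 : 0 ≤ V * (∫ p, (1 - ω p)⁻¹)⁻¹ := mul_nonneg hVpos.le (inv_nonneg.mpr k2c.le)
    exact ⟨le_of_eq hα.symm, by rw [hα, hβ]; linarith, by rw [hβ]; linarith⟩
  · exact ⟨le_of_eq hα.symm, by rw [hα, hβ]; linarith, le_of_eq hβ⟩
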